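/- arXiv:2605.02064 — 7 statements merged into one kernel-verified Lean document; each statement's English description precedes it below -/
import Mathlib

section
/- Let n be a positive integer and q = ⌊√n⌋. Then the set A = {a ∈ {1,...,n} : a ≡ 1 (mod q)} is a multiplicative Sidon set, i.e., for all a, a', b, b' ∈ A with a ≤ a' and b ≤ b', if a·a' = b·b' then a = b and a' = b'. -/
lemma aux_sidon (n a a' b b' : ℕ) (ha0 : 1 ≤ a) (hb0 : 1 ≤ b) (ha'0 : 1 ≤ a')
    (ha'n : a' ≤ n) (hbn : b ≤ n)
    (hma : a ≡ 1 [MOD Nat.sqrt n]) (hma' : a' ≡ 1 [MOD Nat.sqrt n])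
    (hmb' : b' ≡ 1 [MOD Nat.sqrt n])
    (hbb' : b ≤ b') (hab : a < b) (h : a * a' = b * b') : False := by
  set q := Nat.sqrt n with hq
  have hg0 : 0 < Nat.gcd a b := Nat.gcd_pos_of_pos_left _ (by omega)
  set g := Nat.gcd a b with hg
  have haeq : g * (a / g) = a := Nat.mul_div_cancel' (Nat.gcd_dvd_left a b)
  have hbeq : g * (b / g) = b := Nat.mul_div_cancel' (Nat.gcd_dvd_right a b)
  set a₁ := a / g with ha₁
  set b₁ := b / g with hb₁
  have hcop : Nat.Coprime a₁ b₁ := Nat.coprime_div_gcd_div_gcd hg0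
  have ha₁0 : 1 ≤ a₁ := by
    rcases Nat.eq_zero_or_pos a₁ with h0 | h0
    · rw [h0, mul_zero] at haeq; omega
    · exact h0
  have hb₁0 : 1 ≤ b₁ := by
    rcases Nat.eq_zero_or_pos b₁ with h0 | h0
    · rw [h0, mul_zero] at hbeq; omega
    · exact h0
  have hcanc : a₁ * a' = b₁ * b' := by
    have : g * (a₁ * a') = g * (b₁ * b') := by
      rw [← mul_assoc, ← mul_assoc, haeq, hbeq, h]
    exact Nat.eq_of_mul_eq_mul_left hg0 this
  have hdvd : b₁ ∣ a' := by
    have : b₁ ∣ a₁ * a' := ⟨b', hcanc⟩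
    exact (Nat.Coprime.dvd_of_dvd_mul_left hcop.symm) this
  have ha'eq : b₁ * (a' / b₁) = a' := Nat.mul_div_cancel' hdvd
  set c := a' / b₁ with hc
  have hc0 : 1 ≤ c := by
    rcases Nat.eq_zero_or_pos c with h0 | h0
    · rw [h0, mul_zero] at ha'eq; omega
    · exact h0
  have hb'eq : b' = a₁ * c := by
    have : b₁ * (a₁ * c) = b₁ * b' := by
      rw [← hcanc, ← ha'eq]; ring
    exact (Nat.eq_of_mul_eq_mul_left (by omega) this).symm
  -- congruences
  have h1 : g * a₁ ≡ 1 [MOD q] := by rwa [haeq]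
  have h2 : a₁ * c ≡ 1 [MOD q] := by rwa [hb'eq] at hmb'
  have h3 : b₁ * c ≡ 1 [MOD q] := by rwa [ha'eq]
  have hcg : c ≡ g [MOD q] := calc
    c = c * 1 := (mul_one c).symm
    _ ≡ c * (g * a₁) [MOD q] := Nat.ModEq.mul_left c h1.symm
    _ = g * (a₁ * c) := by ring
    _ ≡ g * 1 [MOD q] := Nat.ModEq.mul_left g h2
    _ = g := mul_one g
  have hab₁ : a₁ ≡ b₁ [MOD q] := calc
    a₁ = a₁ * 1 := (mul_one a₁).symm
    _ ≡ a₁ * (b₁ * c) [MOD q] := Nat.ModEq.mul_left a₁ h3.symm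
    _ = b₁ * (a₁ * c) := by ring
    _ ≡ b₁ * 1 [MOD q] := Nat.ModEq.mul_left b₁ h2
    _ = b₁ := mul_one b₁
  have hlt : a₁ < b₁ := by
    rcases lt_or_ge a₁ b₁ with hl | hl
    · exact hl
    · have : b ≤ a := by
        rw [← haeq, ← hbeq]
        exact Nat.mul_le_mul_left g hl
      omega
  have hq1 : 1 ≤ q := by
    have : 0 < n := by omega
    exact Nat.sqrt_pos.mpr this
  have hb₁q : q + 1 ≤ b₁ := by
    have hd := (Nat.modEq_iff_dvd' (le_of_lt hlt)).mp hab₁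
    have := Nat.le_of_dvd (by omega) hd
    omega
  have hnq : n < (q + 1) * (q + 1) := by
    have := Nat.lt_succ_sqrt n
    simpa [hq, Nat.succ_eq_add_one] using this
  have hgq : g ≤ q := by
    by_contra hco
    push_neg at hco
    have : (q + 1) * (q + 1) ≤ g * b₁ := Nat.mul_le_mul hco hb₁q
    rw [hbeq] at this
    omega
  have hcq : c ≤ q := by
    by_contra hco
    push_neg at hco
    have : (q + 1) * (q + 1) ≤ b₁ * c := Nat.mul_le_mul hb₁q hco
    rw [ha'eq] at this
    omega
  have hgc : g = c := by
    rcases le_total c g with hle | hle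
    · have hd := (Nat.modEq_iff_dvd' hle).mp hcg
      rcases Nat.eq_zero_or_pos (g - c) with h0 | hpos
      · omega
      · have := Nat.le_of_dvd hpos hd; omega
    · have hd := (Nat.modEq_iff_dvd' hle).mp hcg.symm
      rcases Nat.eq_zero_or_pos (c - g) with h0 | hpos
      · omega
      · have := Nat.le_of_dvd hpos hd; omega
  have : b' = a := by
    rw [hb'eq, ← hgc, mul_comm, haeq]
  omega

theorem stmt_0 (n : ℕ) (hn : 0 < n) :
    ∀ a a' b b' : ℕ,
      (1 ≤ a ∧ a ≤ n ∧ a ≡ 1 [MOD Nat.sqrt n]) →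
      (1 ≤ a' ∧ a' ≤ n ∧ a' ≡ 1 [MOD Nat.sqrt n]) →
      (1 ≤ b ∧ b ≤ n ∧ b ≡ 1 [MOD Nat.sqrt n]) →
      (1 ≤ b' ∧ b' ≤ n ∧ b' ≡ 1 [MOD Nat.sqrt n]) →
      a ≤ a' → b ≤ b' → a * a' = b * b' → a = b ∧ a' = b' := by
  rintro a a' b b' ⟨ha0, han, hma⟩ ⟨ha'0, ha'n, hma'⟩ ⟨hb0, hbn, hmb⟩ ⟨hb'0, hb'n, hmb'⟩
    haa' hbb' h
  rcases lt_trichotomy a b with hlt | heq | hgt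
  · exact absurd h (fun h => aux_sidon n a a' b b' ha0 hb0 ha'0 ha'n hbn hma hma' hmb' hbb' hlt h)
  · refine ⟨heq, ?_⟩
    subst heq
    exact Nat.eq_of_mul_eq_mul_left (by omega) h
  · exact absurd h.symm
      (fun h => aux_sidon n b b' a a' hb0 ha0 hb'0 hb'n han hmb hmb' hma' haa' hgt h)
end

section
/- For every positive integer n, there exists a multiplicative Sidon set A ⊆ {1,...,n} such that every interval [x, x + ⌊√n⌋] ⊆ [1, n] (with x real) contains an element of A. -/
lemma key_int (s a b c d : ℤ) (hs : 1 ≤ s) (ha0 : 0 ≤ a) (hc0 : 0 ≤ c)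
    (hb : b ≤ s + 1) (hd1 : d ≤ s + 1) (hab : a ≤ b) (hcd : c ≤ d)
    (hsum : c + d ≤ a + b)
    (heq : a * b * s + (a + b) = c * d * s + (c + d)) : a = c ∧ b = d := by
  have hb0 : 0 ≤ b := ha0.trans hab
  have hd0 : 0 ≤ d := hc0.trans hcd
  have ha1 : a ≤ s + 1 := hab.trans hb
  set t : ℤ := c * d - a * b with htdef
  have hts : t * s = a + b - (c + d) := by ring_nf; linarith [heq]
  have ht0 : 0 ≤ t := by nlinarith
  rcases eq_or_lt_of_le ht0 with h0 | h1
  · have hprod : a * b = c * d := by omega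
    have hsum2 : a + b = c + d := by nlinarith
    have hz : (a - c) * (a - d) = 0 := by nlinarith
    rcases mul_eq_zero.1 hz with h | h
    · constructor <;> linarith
    · constructor <;> linarith
  · have ht1 : 1 ≤ t := h1
    exfalso
    rcases eq_or_lt_of_le ha0 with haz | hap
    · have hcd1 : 1 ≤ c := by
        rcases eq_or_lt_of_le hc0 with hcz | h
        · exfalso; nlinarith
        · linarith
      nlinarith
    · have hap1 : 1 ≤ a := hap
      rcases eq_or_lt_of_le ht1 with h1' | h2
      · have hP : a * b + 1 = c * d := by omega
        have hS : c + d + s = a + b := by nlinarith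
        have hub : (s + 1 - a) * (s + 1 - b) ≥ 0 := by
          apply mul_nonneg <;> linarith
        have hdisc : (c - d) ^ 2 ≥ 0 := sq_nonneg _
        have hSge : 3 ≤ c + d := by nlinarith
        have hSle : c + d ≤ s + 2 := by linarith
        nlinarith [mul_nonneg (by linarith : (0:ℤ) ≤ c + d - 3) (by linarith : (0:ℤ) ≤ s + 2 - (c + d))]
      · have hSle : c + d ≤ 2 := by nlinarith
        nlinarith [sq_nonneg (c - d), mul_nonneg ha0 hb0]

theorem stmt_1 (n : ℕ) (hn : 0 < n) :
    ∃ A : Finset ℕ, (∀ a ∈ A, 1 ≤ a ∧ a ≤ n) ∧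
      (∀ a ∈ A, ∀ a' ∈ A, ∀ b ∈ A, ∀ b' ∈ A,
        a ≤ a' → b ≤ b' → a * a' = b * b' → a = b ∧ a' = b') ∧
      (∀ x : ℝ, 1 ≤ x → x + (Nat.sqrt n : ℝ) ≤ n →
        ∃ a ∈ A, x ≤ (a : ℝ) ∧ (a : ℝ) ≤ x + (Nat.sqrt n : ℝ)) := by
  set s := Nat.sqrt n with hsdef
  have hs : 1 ≤ s := Nat.sqrt_pos.2 hn
  refine ⟨((Finset.range n).image fun k => k * s + 1).filter (fun a => a ≤ n), ?_, ?_, ?_⟩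
  · intro a ha
    simp only [Finset.mem_filter, Finset.mem_image, Finset.mem_range] at ha
    obtain ⟨⟨k, _, rfl⟩, h2⟩ := ha
    omega
  · -- Sidon property
    have hmem : ∀ a ∈ ((Finset.range n).image fun k => k * s + 1).filter (fun a => a ≤ n),
        ∃ k : ℕ, a = k * s + 1 ∧ k ≤ s + 1 := by
      intro a ha
      simp only [Finset.mem_filter, Finset.mem_image, Finset.mem_range] at ha
      obtain ⟨⟨k, _, rfl⟩, h2⟩ := ha
      refine ⟨k, rfl, ?_⟩
      by_contra h
      push_neg at h
      have h1 : (s + 2) * s ≤ k * s := Nat.mul_le_mul_right s (by omega)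
      have h2' : n < (s + 1) * (s + 1) := Nat.lt_succ_sqrt n
      nlinarith
    intro a ha a' ha' b hb b' hb' haa hbb hprod
    obtain ⟨α, rfl, hα⟩ := hmem a ha
    obtain ⟨β, rfl, hβ⟩ := hmem a' ha'
    obtain ⟨γ, rfl, hγ⟩ := hmem b hb
    obtain ⟨δ, rfl, hδ⟩ := hmem b' hb'
    have hαβ : α ≤ β := by
      have := Nat.le_of_add_le_add_right (by omega : α * s + 1 ≤ β * s + 1)
      exact Nat.le_of_mul_le_mul_right this hs
    have hγδ : γ ≤ δ := by
      have := Nat.le_of_add_le_add_right (by omega : γ * s + 1 ≤ δ * s + 1)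
      exact Nat.le_of_mul_le_mul_right this hs
    -- cast to ℤ and cancel s
    have hsZ : (1:ℤ) ≤ (s:ℤ) := by exact_mod_cast hs
    have hprodZ : ((α:ℤ) * s + 1) * ((β:ℤ) * s + 1) = ((γ:ℤ) * s + 1) * ((δ:ℤ) * s + 1) := by
      exact_mod_cast hprod
    have heqZ : (α:ℤ) * β * s + ((α:ℤ) + β) = (γ:ℤ) * δ * s + ((γ:ℤ) + δ) := by
      have hs0 : (s:ℤ) ≠ 0 := by linarith
      apply mul_left_cancel₀ hs0
      linear_combination hprodZ
    have hαZ : (α:ℤ) ≤ (s:ℤ) + 1 := by exact_mod_cast hα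
    have hβZ : (β:ℤ) ≤ (s:ℤ) + 1 := by exact_mod_cast hβ
    have hγZ : (γ:ℤ) ≤ (s:ℤ) + 1 := by exact_mod_cast hγ
    have hδZ : (δ:ℤ) ≤ (s:ℤ) + 1 := by exact_mod_cast hδ
    have hαβZ : (α:ℤ) ≤ (β:ℤ) := by exact_mod_cast hαβ
    have hγδZ : (γ:ℤ) ≤ (δ:ℤ) := by exact_mod_cast hγδ
    rcases le_total ((γ:ℤ) + δ) ((α:ℤ) + β) with hle | hle
    · obtain ⟨h1, h2⟩ := key_int s α β γ δ hsZ (Int.natCast_nonneg α) (Int.natCast_nonneg γ)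
        hβZ hδZ hαβZ hγδZ hle heqZ
      have e1 : α = γ := by exact_mod_cast h1
      have e2 : β = δ := by exact_mod_cast h2
      subst e1; subst e2; exact ⟨rfl, rfl⟩
    · obtain ⟨h1, h2⟩ := key_int s γ δ α β hsZ (Int.natCast_nonneg γ) (Int.natCast_nonneg α)
        hδZ hβZ hγδZ hαβZ hle heqZ.symm
      have e1 : γ = α := by exact_mod_cast h1
      have e2 : δ = β := by exact_mod_cast h2
      subst e1; subst e2; exact ⟨rfl, rfl⟩
  · -- covering intervals
    intro x hx hxn
    have hsR : (1:ℝ) ≤ (s:ℝ) := by exact_mod_cast hs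
    set k : ℕ := ⌈(x - 1) / s⌉₊ with hkdef
    have hs0 : (0:ℝ) < s := by linarith
    have hx1 : (0:ℝ) ≤ (x - 1) / s := div_nonneg (by linarith) (by linarith)
    have hge : x - 1 ≤ k * s := by
      have := Nat.le_ceil ((x - 1) / s)
      calc x - 1 = ((x - 1) / s) * s := by field_simp
        _ ≤ (k:ℝ) * s := by apply mul_le_mul_of_nonneg_right this (le_of_lt hs0)
    have hlt : (k:ℝ) * s < x - 1 + s := by
      have h := Nat.ceil_lt_add_one hx1
      calc (k:ℝ) * s < ((x - 1) / s + 1) * s := by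
            apply mul_lt_mul_of_pos_right h hs0
        _ = x - 1 + s := by field_simp
    have haR : (k * s + 1 : ℝ) ≤ n := by linarith
    have han : k * s + 1 ≤ n := by exact_mod_cast haR
    refine ⟨k * s + 1, ?_, by push_cast; linarith, by push_cast; linarith⟩
    simp only [Finset.mem_filter, Finset.mem_image, Finset.mem_range]
    exact ⟨⟨k, by nlinarith [Nat.le_mul_of_pos_right k (show 0 < s from hs)], rfl⟩, han⟩
end

section
/- Let q ≥ 1 be an integer and let i, j, k, ℓ be integers with 0 ≤ i ≤ j ≤ q+1 and 0 ≤ k ≤ ℓ ≤ q+1. If (1+qi)(1+qj) = (1+qk)(1+qℓ), then i = k and j = ℓ. -/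
theorem stmt_2_aux (q i j k l : ℤ) (hq : 1 ≤ q)
    (hi : 0 ≤ i) (hij : i ≤ j) (hj : j ≤ q + 1)
    (hk : 0 ≤ k) (hkl : k ≤ l) (hl : l ≤ q + 1) (hik : i ≤ k)
    (h : (1 + q * i) * (1 + q * j) = (1 + q * k) * (1 + q * l)) :
    i = k ∧ j = l := by
  have hq0 : (0:ℤ) < q := by linarith
  -- l ≤ j
  have hlj : l ≤ j := by
    by_contra hc
    push_neg at hc
    have hB : (0:ℤ) < 1 + q * j := by nlinarith [mul_nonneg hq0.le (hi.trans hij)]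
    have hC : (0:ℤ) < 1 + q * k := by nlinarith [mul_nonneg hq0.le hk]
    nlinarith [mul_nonneg (mul_nonneg hq0.le (sub_nonneg.2 hik)) hB.le,
      mul_pos hC (mul_pos hq0 (sub_pos.2 hc))]
  have hjk : k ≤ j := hkl.trans hlj
  -- key identity
  have h2 : q * (i + j - (k + l)) = q * (q * (k*l - i*j)) := by linear_combination h
  have key : i + j - (k + l) = q * (k*l - i*j) :=
    mul_left_cancel₀ (ne_of_gt hq0) h2
  -- s ≥ t
  have hst : 0 ≤ i + j - (k + l) := by
    by_contra hc
    push_neg at hc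
    have hC : (0:ℤ) < 1 + q * k := by nlinarith
    nlinarith [mul_nonneg (mul_nonneg (mul_nonneg hq0.le (sub_nonneg.2 hik)) hq0.le) (sub_nonneg.2 hjk), mul_pos hC (mul_pos hq0 (by linarith : (0:ℤ) < k + l - (i + j)))]
  have hd : 0 ≤ k*l - i*j := by
    by_contra hc
    push_neg at hc
    nlinarith
  rcases eq_or_lt_of_le hd with hd0 | hd1
  · -- k*l = i*j and i+j = k+l
    have hsum : i + j - (k + l) = 0 := by rw [key, ← hd0]; ring
    have hzero : (k - i) * (l - i) = 0 := by linear_combination -hd0 + i * hsum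
    rcases mul_eq_zero.mp hzero with h0 | h0 <;> constructor <;> omega
  · have hge : q ≤ i + j - (k + l) := by
      calc q = q * 1 := (mul_one q).symm
      _ ≤ q * (k*l - i*j) := by
          apply mul_le_mul_of_nonneg_left _ hq0.le
          linarith
      _ = i + j - (k + l) := key.symm
    have hki : k = i := by omega
    exfalso
    subst hki
    nlinarith [mul_nonneg hi (sub_nonneg.2 hlj)]

theorem stmt_2 (q i j k l : ℤ) (hq : 1 ≤ q)
    (hi : 0 ≤ i) (hij : i ≤ j) (hj : j ≤ q + 1)
    (hk : 0 ≤ k) (hkl : k ≤ l) (hl : l ≤ q + 1)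
    (h : (1 + q * i) * (1 + q * j) = (1 + q * k) * (1 + q * l)) :
    i = k ∧ j = l := by
  rcases le_total i k with hik | hki
  · exact stmt_2_aux q i j k l hq hi hij hj hk hkl hl hik h
  · obtain ⟨h1, h2⟩ := stmt_2_aux q k l i j hq hk hkl hl hi hij hj hki h.symm
    exact ⟨h1.symm, h2.symm⟩
end

section
/- Let q ≥ 1 and let i, j, k, ℓ be integers with 0 ≤ i ≤ j ≤ q+1 and 0 ≤ k ≤ ℓ ≤ q+1, and suppose Δ := i + j - k - ℓ satisfies Δ ≥ q and (i+j-k-ℓ) + q(ij - kℓ) = 0. Then a contradiction follows; i.e., no such i, j, k, ℓ exist. -/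
theorem stmt_4 (q i j k l : ℤ) (hq : 1 ≤ q)
    (hi : 0 ≤ i) (hij : i ≤ j) (hj : j ≤ q + 1)
    (hk : 0 ≤ k) (hkl : k ≤ l) (hl : l ≤ q + 1)
    (hΔ : i + j - k - l ≥ q)
    (h : (i + j - k - l) + q * (i * j - k * l) = 0) :
    False := by
  have hd : k * l - i * j ≥ 1 := by nlinarith [mul_nonneg hi (hi.trans hij)]
  nlinarith [mul_nonneg (sub_nonneg.2 hj) (by linarith : (0:ℤ) ≤ q + 1 - i),
    sq_nonneg (k - l), mul_nonneg hk (hk.trans hkl),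
    mul_nonneg hi (hi.trans hij), sq_nonneg (i + j - k - l - q),
    mul_nonneg (by linarith : (0:ℤ) ≤ i + j - k - l - q) (by linarith : (0:ℤ) ≤ k + l),
    mul_nonneg (by linarith : (0:ℤ) ≤ i + j - k - l - q) (by linarith : (0:ℤ) ≤ q - 1)]
end

section
/- Let J ≥ 1 be a real number and let A be a finite set of positive integers such that each a ∈ A can be written a = m_a · p_a where p_a is prime, 1 ≤ m_a ≤ J < p_a, and the primes p_a are pairwise distinct for distinct a ∈ A. Then A is a multiplicative Sidon set. -/
theorem stmt_5 (J : ℝ) (hJ : 1 ≤ J) (A : Finset ℕ)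
    (hpos : ∀ a ∈ A, 0 < a)
    (m p : ℕ → ℕ)
    (hfact : ∀ a ∈ A, a = m a * p a)
    (hprime : ∀ a ∈ A, (p a).Prime)
    (hm : ∀ a ∈ A, 1 ≤ m a ∧ (m a : ℝ) ≤ J)
    (hp : ∀ a ∈ A, J < (p a : ℝ))
    (hdist : ∀ a ∈ A, ∀ b ∈ A, a ≠ b → p a ≠ p b) :
    ∀ a₁ ∈ A, ∀ a₂ ∈ A, ∀ a₃ ∈ A, ∀ a₄ ∈ A,
      a₁ ≤ a₂ → a₃ ≤ a₄ → a₁ * a₂ = a₃ * a₄ → a₁ = a₃ ∧ a₂ = a₄ := by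
  -- p x doesn't divide m y
  have hnd : ∀ x ∈ A, ∀ y ∈ A, ¬ p x ∣ m y := by
    intro x hx y hy hdvd
    have h1 : p x ≤ m y := Nat.le_of_dvd (hm y hy).1 hdvd
    have : (p x : ℝ) ≤ m y := by exact_mod_cast h1
    linarith [hp x hx, (hm y hy).2]
  intro a₁ h1 a₂ h2 a₃ h3 a₄ h4 h12 h34 heq
  have main : ∀ x ∈ A, ∀ y ∈ A, p x ∣ y → x = y := by
    intro x hx y hy hdvd
    rw [hfact y hy] at hdvd
    rcases (hprime x hx).dvd_mul.mp hdvd with h | h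
    · exact absurd h (hnd x hx y hy)
    · have := (Nat.prime_dvd_prime_iff_eq (hprime x hx) (hprime y hy)).mp h
      by_contra hne
      exact hdist x hx y hy hne this
  have hd1 : p a₁ ∣ a₃ * a₄ := by
    rw [← heq]; exact Dvd.dvd.mul_right (Dvd.intro_left (m a₁) (hfact a₁ h1).symm) a₂
  have h13 : a₁ = a₃ ∨ a₁ = a₄ := by
    rcases (hprime a₁ h1).dvd_mul.mp hd1 with h | h
    · exact Or.inl (main a₁ h1 a₃ h3 h)
    · exact Or.inr (main a₁ h1 a₄ h4 h)
  have hpos3 := hpos a₃ h3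
  have hpos1 := hpos a₁ h1
  rcases h13 with h | h
  · subst h
    have : a₂ = a₄ := by
      have := heq
      exact Nat.eq_of_mul_eq_mul_left hpos1 this
    exact ⟨rfl, this⟩
  · subst h
    have h23 : a₂ = a₃ := by
      have : a₁ * a₂ = a₁ * a₃ := by rw [heq, Nat.mul_comm]
      exact Nat.eq_of_mul_eq_mul_left hpos1 this
    subst h23
    have : a₁ = a₂ := le_antisymm h12 h34
    exact ⟨this, this.symm⟩
end

section
/- Let G = (L, R, E) be a finite bipartite graph with a non-negative weight w(e) on each edge. Suppose there exists L₀ > 0 such that for every u ∈ L the sum of w(e) over edges e incident to u is at least L₀, and for every v ∈ R the sum of w(e) over edges incident to v is at most L₀. Then G has a matching covering all vertices of L. -/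
theorem stmt_8 {L R : Type*} [Fintype L] [Fintype R] [DecidableEq R]
    (E : L → R → Prop) [∀ u v, Decidable (E u v)]
    (w : L → R → ℝ) (hw : ∀ u v, E u v → 0 ≤ w u v)
    (L₀ : ℝ) (hL₀ : 0 < L₀)
    (hleft : ∀ u : L, L₀ ≤ ∑ v ∈ Finset.univ.filter (fun v => E u v), w u v)
    (hright : ∀ v : R, ∑ u ∈ Finset.univ.filter (fun u => E u v), w u v ≤ L₀) :
    ∃ f : L → R, Function.Injective f ∧ ∀ u : L, E u (f u) := by
  rw [← Fintype.all_card_le_filter_rel_iff_exists_injective]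
  intro A
  set N : Finset R := {b | ∃ a ∈ A, E a b} with hN
  have key : (A.card : ℝ) * L₀ ≤ (N.card : ℝ) * L₀ := by
    calc (A.card : ℝ) * L₀ = ∑ u ∈ A, L₀ := by
          rw [Finset.sum_const, nsmul_eq_mul]
      _ ≤ ∑ u ∈ A, ∑ v ∈ Finset.univ.filter (fun v => E u v), w u v :=
          Finset.sum_le_sum fun u _ => hleft u
      _ = ∑ u ∈ A, ∑ v ∈ N.filter (fun v => E u v), w u v := by
          refine Finset.sum_congr rfl fun u hu => ?_
          refine Finset.sum_congr ?_ fun _ _ => rfl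
          ext v
          simp only [Finset.mem_filter, Finset.mem_univ, true_and, hN, Finset.mem_filter,
            Finset.mem_univ, true_and]
          constructor
          · intro h; exact ⟨by simpa using ⟨u, hu, h⟩, h⟩
          · exact fun h => h.2
      _ = ∑ v ∈ N, ∑ u ∈ A.filter (fun u => E u v), w u v := by
          rw [Finset.sum_comm']
          intro u v
          simp only [Finset.mem_filter]
          tauto
      _ ≤ ∑ v ∈ N, ∑ u ∈ Finset.univ.filter (fun u => E u v), w u v := by
          refine Finset.sum_le_sum fun v _ => ?_
          refine Finset.sum_le_sum_of_subset_of_nonneg ?_ ?_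
          · exact Finset.filter_subset_filter _ (Finset.subset_univ A)
          · intro u hu _
            exact hw u v (Finset.mem_filter.mp hu).2
      _ ≤ ∑ v ∈ N, L₀ := Finset.sum_le_sum fun v _ => hright v
      _ = (N.card : ℝ) * L₀ := by rw [Finset.sum_const, nsmul_eq_mul]
  have := le_of_mul_le_mul_right key hL₀
  exact_mod_cast this
end

section
/- Let ρ = (13 - √69)/10 and let α satisfy ρ < α < 1/2. Then there exist real numbers β, δ with 0 < β < α < 1/2 and 3α - 4/3 < δ < (5α - 2)/3 such that 1 - α - (1 - α² - β(2 - β))/δ > 0. -/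
theorem stmt_12 (α : ℝ) (h₁ : (13 - Real.sqrt 69) / 10 < α) (h₂ : α < 1/2) :
    ∃ β δ : ℝ, 0 < β ∧ β < α ∧ α < 1/2 ∧
      3 * α - 4/3 < δ ∧ δ < (5 * α - 2) / 3 ∧
      1 - α - (1 - α ^ 2 - β * (2 - β)) / δ > 0 := by
  have h69 : Real.sqrt 69 ^ 2 = 69 := Real.sq_sqrt (by norm_num)
  have hs : Real.sqrt 69 > 13 - 10 * α := by linarith
  have hm : -5*α^2 + 13*α - 5 > 0 := by nlinarith [Real.sqrt_nonneg 69]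
  set m : ℝ := -5*α^2 + 13*α - 5 with hmdef
  have hα5 : α > 5/13 := by nlinarith [sq_nonneg α]
  set t : ℝ := min (m/12) (min ((1-2*α)/3) 1) with htdef
  have ht0 : 0 < t := by
    apply lt_min (by linarith)
    exact lt_min (by linarith) one_pos
  have ht1 : t ≤ m/12 := min_le_left _ _
  have ht2 : t ≤ (1-2*α)/3 := le_trans (min_le_right _ _) (min_le_left _ _)
  have ht3 : t ≤ 1 := le_trans (min_le_right _ _) (min_le_right _ _)
  have hδpos : 0 < (5*α-2)/3 - t := by nlinarith
  refine ⟨α - t, (5*α-2)/3 - t, by linarith, by linarith, h₂, by linarith, by linarith, ?_⟩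
  have key : 1 - α^2 - (α - t)*(2-(α - t)) < (1 - α) * ((5*α-2)/3 - t) := by
    nlinarith [mul_pos ht0 (mul_pos ht0 ht0)]
  have hdiv : (1 - α^2 - (α - t)*(2-(α - t))) / ((5*α-2)/3 - t) < 1 - α :=
    (div_lt_iff₀ hδpos).mpr key
  linarith
end
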